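/- arXiv:2206.03976 — 2 statements merged into one kernel-verified Lean document; each statement's English description precedes it below -/
import Mathlib

section
/- With qₙ = 2πn/L, c ≠ 0, β_t(s,t) = Σ_{n=1}^N [aₙ sin(qₙ(s+ct)) + bₙ cos(qₙ(s+ct))] and β_s(s,t) = (1/c) Σ_{n=1}^N [aₙ(sin(qₙ(s+ct)) − sin(qₙ s)) + bₙ(cos(qₙ(s+ct)) − cos(qₙ s))], the double integral satisfies (−a/L)∫₀^T∫₀^L β_t β_s ds dt = (−a/c)[ T·Σₙ (aₙ²+bₙ²)/2 − Σₙ (aₙ²+bₙ²) sin(qₙ cT)/(2 qₙ c) ]. -/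
/-!
Both `βt` and `βs` are built from the modes `fₙ x = aₙ sin (qₙ x) + bₙ cos (qₙ x)`. Writing the sine
as a shifted cosine, the product-to-sum formula gives the orthogonality of shifted modes over one
period, `∫₀^L fₙ (s + u) fₘ (s + v) ds = δₙₘ (L/2) (aₙ² + bₙ²) cos (qₙ (u - v))`. Hence the inner
integral collapses to `(1/c) Σₙ (L/2) (aₙ² + bₙ²) (1 - cos (qₙ c t))`, whose integral over `[0, T]`
is elementary.
-/

open Real intervalIntegral Finset

theorem integral_cos_mul_add (a b φ : ℝ) {r : ℝ} (hr : r ≠ 0) :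
    ∫ s in a..b, cos (r * s + φ) = (sin (r * b + φ) - sin (r * a + φ)) / r := by
  rw [integral_comp_mul_add cos hr, integral_cos, smul_eq_mul]
  field_simp

theorem integral_cos_harmonic {L : ℝ} (hL : L ≠ 0) {k : ℤ} (hk : k ≠ 0) (φ : ℝ) :
    ∫ s in (0 : ℝ)..L, cos (2 * π * k / L * s + φ) = 0 := by
  rw [integral_cos_mul_add _ _ _ (by positivity), div_mul_cancel₀ _ hL, mul_zero, zero_add,
    mul_comm (2 * π), add_comm, sin_add_int_mul_two_pi, sub_self, zero_div]

theorem integral_cos_mul_cos_harmonic {L : ℝ} (hL : L ≠ 0) {n : ℕ} (hn : n ≠ 0) (m : ℕ)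
    (φ ψ : ℝ) :
    ∫ s in (0 : ℝ)..L, cos (2 * π * n / L * s + φ) * cos (2 * π * m / L * s + ψ) =
      if n = m then L / 2 * cos (φ - ψ) else 0 := by
  have product_to_sum : ∀ s, cos (2 * π * n / L * s + φ) * cos (2 * π * m / L * s + ψ) =
      (cos (2 * π * ((n + m : ℤ) : ℝ) / L * s + (φ + ψ)) +
        cos (2 * π * ((n - m : ℤ) : ℝ) / L * s + (φ - ψ))) / 2 := by
    intro s
    have hsum : 2 * π * ((n + m : ℤ) : ℝ) / L * s + (φ + ψ) =
        (2 * π * n / L * s + φ) + (2 * π * m / L * s + ψ) := by push_cast; ring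
    have hdiff : 2 * π * ((n - m : ℤ) : ℝ) / L * s + (φ - ψ) =
        (2 * π * n / L * s + φ) - (2 * π * m / L * s + ψ) := by push_cast; ring
    rw [hsum, hdiff]
    linarith [two_mul_cos_mul_cos (2 * π * n / L * s + φ) (2 * π * m / L * s + ψ)]
  simp_rw [product_to_sum]
  rw [integral_div, integral_add (Continuous.intervalIntegrable (by fun_prop) _ _)
    (Continuous.intervalIntegrable (by fun_prop) _ _), integral_cos_harmonic hL (by omega)]
  split_ifs with h
  · subst h
    simp only [sub_self, Int.cast_zero, mul_zero, zero_div, zero_mul, zero_add, integral_const,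
      sub_zero, smul_eq_mul]
    ring
  · rw [integral_cos_harmonic hL (by omega)]
    simp

noncomputable def fourierMode (L : ℝ) (A B : ℕ → ℝ) (n : ℕ) (x : ℝ) : ℝ :=
  A n * sin (2 * π * n / L * x) + B n * cos (2 * π * n / L * x)

theorem fourierMode_add_eq_cos (L : ℝ) (A B : ℕ → ℝ) (n : ℕ) (s u : ℝ) :
    fourierMode L A B n (s + u) =
      A n * cos (2 * π * n / L * s + (2 * π * n / L * u - π / 2)) +
        B n * cos (2 * π * n / L * s + 2 * π * n / L * u) := by
  rw [fourierMode, ← add_sub_assoc, cos_sub_pi_div_two, mul_add]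

theorem integral_fourierMode_mul_fourierMode {L : ℝ} (hL : L ≠ 0) (A B : ℕ → ℝ) {n : ℕ}
    (hn : n ≠ 0) (m : ℕ) (u v : ℝ) :
    ∫ s in (0 : ℝ)..L, fourierMode L A B n (s + u) * fourierMode L A B m (s + v) =
      if n = m then L / 2 * (A n ^ 2 + B n ^ 2) * cos (2 * π * n / L * (u - v)) else 0 := by
  simp_rw [fourierMode_add_eq_cos, add_mul, mul_add]
  simp (disch := exact Continuous.intervalIntegrable (by fun_prop) _ _) only
    [integral_add, mul_mul_mul_comm (A n), mul_mul_mul_comm (B n), integral_const_mul,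
     integral_cos_mul_cos_harmonic hL hn]
  split_ifs with h
  · subst h
    set θ := 2 * π * n / L * (u - v)
    have h₁ : 2 * π * n / L * u - π / 2 - (2 * π * n / L * v - π / 2) = θ := by ring
    have h₂ : 2 * π * n / L * u - π / 2 - 2 * π * n / L * v = θ - π / 2 := by ring
    have h₃ : 2 * π * n / L * u - (2 * π * n / L * v - π / 2) = θ + π / 2 := by ring
    have h₄ : 2 * π * n / L * u - 2 * π * n / L * v = θ := by ring
    rw [h₁, h₂, h₃, h₄, cos_sub_pi_div_two, cos_add_pi_div_two]
    ring
  · simp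

theorem integral_sum_fourierMode_mul_sum_sub {L : ℝ} (hL : L ≠ 0) (A B : ℕ → ℝ) {S : Finset ℕ}
    (hS : 0 ∉ S) (u v : ℝ) :
    ∫ s in (0 : ℝ)..L, (∑ n ∈ S, fourierMode L A B n (s + u)) *
        ∑ m ∈ S, (fourierMode L A B m (s + u) - fourierMode L A B m (s + v)) =
      ∑ n ∈ S, L / 2 * (A n ^ 2 + B n ^ 2) * (1 - cos (2 * π * n / L * (u - v))) := by
  have hcont (n m : ℕ) (w : ℝ) :
      Continuous fun s ↦ fourierMode L A B n (s + u) * fourierMode L A B m (s + w) := by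
    unfold fourierMode; fun_prop
  simp_rw [sum_mul_sum, mul_sub (fourierMode L A B _ _)]
  rw [integral_finsetSum]
  · refine sum_congr rfl fun n hn ↦ ?_
    have hn0 : n ≠ 0 := ne_of_mem_of_not_mem hn hS
    rw [integral_finsetSum]
    · simp_rw [integral_sub ((hcont _ _ _).intervalIntegrable _ _)
        ((hcont _ _ _).intervalIntegrable _ _), integral_fourierMode_mul_fourierMode hL A B hn0]
      rw [sum_sub_distrib, sum_ite_eq, sum_ite_eq, if_pos hn, if_pos hn, sub_self, mul_zero,
        cos_zero]
      ring
    · exact fun m _ ↦ ((hcont _ _ _).sub (hcont _ _ _)).intervalIntegrable _ _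
  · exact fun n _ ↦
      (continuous_finsetSum _ fun m _ ↦ (hcont _ _ _).sub (hcont _ _ _)).intervalIntegrable _ _

theorem integral_one_sub_cos_mul {ω : ℝ} (hω : ω ≠ 0) (T : ℝ) :
    ∫ t in (0 : ℝ)..T, (1 - cos (ω * t)) = T - sin (ω * T) / ω := by
  rw [integral_sub intervalIntegrable_const (Continuous.intervalIntegrable (by fun_prop) _ _)]
  simpa using integral_cos_mul_add 0 T 0 hω

theorem com_displacement_fourier_general
    (L T a c : ℝ) (hL : 0 < L) (hc : c ≠ 0)
    (N : ℕ) (A B : ℕ → ℝ)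
    (q : ℕ → ℝ) (hq : ∀ n, q n = 2 * π * n / L)
    (βt βs : ℝ → ℝ → ℝ)
    (hβt : ∀ s t : ℝ, βt s t =
      ∑ n ∈ Finset.Icc 1 N,
        (A n * Real.sin (q n * (s + c * t)) + B n * Real.cos (q n * (s + c * t))))
    (hβs : ∀ s t : ℝ, βs s t = (1 / c) *
      ∑ n ∈ Finset.Icc 1 N,
        (A n * (Real.sin (q n * (s + c * t)) - Real.sin (q n * s)) +
         B n * (Real.cos (q n * (s + c * t)) - Real.cos (q n * s)))) :
    (-a / L) * ∫ t in (0 : ℝ)..T, ∫ s in (0 : ℝ)..L, βt s t * βs s t =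
      (-a / c) *
        (T * ∑ n ∈ Finset.Icc 1 N, (A n ^ 2 + B n ^ 2) / 2 -
         ∑ n ∈ Finset.Icc 1 N,
           (A n ^ 2 + B n ^ 2) * Real.sin (q n * c * T) / (2 * q n * c)) := by
  obtain rfl : q = fun n : ℕ ↦ 2 * π * n / L := funext hq
  have hβt' (s t : ℝ) : βt s t = ∑ n ∈ Icc 1 N, fourierMode L A B n (s + c * t) := hβt s t
  have hβs' (s t : ℝ) : βs s t =
      1 / c * ∑ n ∈ Icc 1 N, (fourierMode L A B n (s + c * t) - fourierMode L A B n (s + 0)) := by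
    rw [hβs, add_zero]
    exact congrArg _ (sum_congr rfl fun n _ ↦ by unfold fourierMode; ring)
  have hfreq {n : ℕ} (hn : n ∈ Icc 1 N) : 2 * π * n / L * c ≠ 0 := by
    have : n ≠ 0 := by grind
    positivity
  have inner (t : ℝ) : ∫ s in (0 : ℝ)..L, βt s t * βs s t =
      1 / c * ∑ n ∈ Icc 1 N, L / 2 * (A n ^ 2 + B n ^ 2) * (1 - cos (2 * π * n / L * c * t)) := by
    simp_rw [hβt', hβs', mul_left_comm _ (1 / c), integral_const_mul,
      integral_sum_fourierMode_mul_sum_sub hL.ne' A B (by simp : 0 ∉ Icc 1 N), sub_zero,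
      mul_assoc _ c t]
  simp_rw [inner, integral_const_mul]
  rw [integral_finsetSum fun n _ ↦ Continuous.intervalIntegrable (by fun_prop) _ _,
    sum_congr rfl fun n hn ↦ by rw [integral_const_mul, integral_one_sub_cos_mul (hfreq hn)]]
  simp only [mul_sum, ← sum_sub_distrib]
  refine sum_congr rfl fun n hn ↦ ?_
  have := hfreq hn
  field_simp

/-- Center-of-mass displacement double integral for the optimal Fourier gait:
`(-a/L)∫₀^T∫₀^L β_t β_s ds dt
  = (-a/c)[T Σₙ (aₙ²+bₙ²)/2 - Σₙ (aₙ²+bₙ²) sin(qₙcT)/(2qₙc)]`. -/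
theorem com_displacement_fourier
    (L T a c : ℝ) (hL : 0 < L) (hT : 0 < T) (hc : c ≠ 0)
    (N : ℕ) (A B : ℕ → ℝ)
    (q : ℕ → ℝ) (hq : ∀ n, q n = 2 * π * n / L)
    (βt βs : ℝ → ℝ → ℝ)
    (hβt : ∀ s t : ℝ, βt s t =
      ∑ n ∈ Finset.Icc 1 N,
        (A n * Real.sin (q n * (s + c * t)) + B n * Real.cos (q n * (s + c * t))))
    (hβs : ∀ s t : ℝ, βs s t = (1 / c) *
      ∑ n ∈ Finset.Icc 1 N,
        (A n * (Real.sin (q n * (s + c * t)) - Real.sin (q n * s)) +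
         B n * (Real.cos (q n * (s + c * t)) - Real.cos (q n * s)))) :
    (-a / L) * ∫ t in (0 : ℝ)..T, ∫ s in (0 : ℝ)..L, βt s t * βs s t =
      (-a / c) *
        (T * ∑ n ∈ Finset.Icc 1 N, (A n ^ 2 + B n ^ 2) / 2 -
         ∑ n ∈ Finset.Icc 1 N,
           (A n ^ 2 + B n ^ 2) * Real.sin (q n * c * T) / (2 * q n * c)) :=
  com_displacement_fourier_general L T a c hL hc N A B q hq βt βs hβt hβs
end

section
/- Let Γ_s(s,t) = γ Σ_{n=1}^N [aₙ sin(qₙ(s+ct)) + bₙ cos(qₙ(s+ct))] − (kqₙ/c)-weighted derivative terms, and β_t as in the Fourier solution. Then the total work done ∫₀^T∫₀^L Γ_s(s,t) β_t(s,t) ds dt equals 2LγT Δ₂ + (2L³γ²kα²/a²)(Δ₂ − Σ_{n=1}^N cos(2nπTa/(L²γα)) (aₙ²+bₙ²)/4), where Δ₂ = (1/4)Σₙ(aₙ²+bₙ²) and c = a/(Lγα). -/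
open Real intervalIntegral Finset

/-!
In the moving phase `φₙ = qₙ c t`, the data are finite sums of modes
`a sin (qₙ s + φₙ) + b cos (qₙ s + φₙ)`, and `Γ_s = γ β_t - (k/c) (∂ₛβ_t(·, t) - ∂ₛβ_t(·, 0))`.
Modes of different frequencies are orthogonal on the period `[0, L]`, and within one mode the
integral over a period only depends on the phase difference. Hence `∫ β_t²` gives
`(L/2) Σ (aₙ² + bₙ²)`, `∫ ∂ₛβ_t β_t` vanishes, and the phase lag `qₙ c t` of `∂ₛβ_t(·, 0)`
against `β_t` contributes `(L/2) qₙ (aₙ² + bₙ²) sin (qₙ c t)`; integrating in `t` yields the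
cosine terms.
-/

noncomputable def trigMode (ω a b φ s : ℝ) : ℝ :=
  a * sin (ω * s + φ) + b * cos (ω * s + φ)

noncomputable def trigSum (N : ℕ) (ω a b φ : ℕ → ℝ) (s : ℝ) : ℝ :=
  ∑ n ∈ Icc 1 N, trigMode (ω n) (a n) (b n) (φ n) s

@[fun_prop]
theorem continuous_trigMode (ω a b φ : ℝ) : Continuous (trigMode ω a b φ) := by
  unfold trigMode
  fun_prop

theorem continuous_trigSum (N : ℕ) (ω a b φ : ℕ → ℝ) : Continuous (trigSum N ω a b φ) := by
  unfold trigSum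
  fun_prop

theorem hasDerivAt_trigMode (ω a b φ s : ℝ) :
    HasDerivAt (trigMode ω a b φ) (trigMode ω (-(ω * b)) (ω * a) φ s) s := by
  have hlin : HasDerivAt (fun s => ω * s + φ) ω s := by
    simpa using ((hasDerivAt_id s).const_mul ω).add_const φ
  exact ((hlin.sin.const_mul a).add (hlin.cos.const_mul b)).congr_deriv (by unfold trigMode; ring)

theorem hasDerivAt_trigSum (N : ℕ) (ω a b φ : ℕ → ℝ) (s : ℝ) :
    HasDerivAt (trigSum N ω a b φ)
      (trigSum N ω (fun n => -(ω n * b n)) (fun n => ω n * a n) φ s) s :=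
  HasDerivAt.fun_sum fun _ _ => hasDerivAt_trigMode _ _ _ _ s

theorem trigMode_mul_trigMode (u v a b φ c d ψ s : ℝ) :
    trigMode u a b φ s * trigMode v c d ψ s =
      (trigMode (u - v) (a * d - b * c) (a * c + b * d) (φ - ψ) s +
        trigMode (u + v) (a * d + b * c) (b * d - a * c) (φ + ψ) s) / 2 := by
  have hdiff : (u - v) * s + (φ - ψ) = (u * s + φ) - (v * s + ψ) := by ring
  have hsum : (u + v) * s + (φ + ψ) = (u * s + φ) + (v * s + ψ) := by ring
  simp only [trigMode, hdiff, hsum, sin_sub, cos_sub, sin_add, cos_add]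
  ring

theorem integral_trigMode_int_freq {L : ℝ} (hL : L ≠ 0) (j : ℤ) (a b θ : ℝ) :
    ∫ s in (0 : ℝ)..L, trigMode (2 * π * j / L) a b θ s =
      if j = 0 then L * (a * sin θ + b * cos θ) else 0 := by
  split_ifs with hj
  · simp [hj, trigMode]
    ring
  set ω := 2 * π * j / L
  have hω : ω ≠ 0 := div_ne_zero (mul_ne_zero (by positivity) (by exact_mod_cast hj)) hL
  -- the primitive is again a mode of frequency `ω`, and `ω L = 2πj` is a whole number of periods
  have hprim : ∀ s, HasDerivAt (fun s => trigMode ω (b / ω) (-(a / ω)) θ s) (trigMode ω a b θ s) s :=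
    fun s => (hasDerivAt_trigMode ω _ _ θ s).congr_deriv (by field_simp)
  rw [integral_eq_sub_of_hasDerivAt (fun s _ => hprim s)
    (by apply Continuous.intervalIntegrable; fun_prop)]
  have hperiod : ω * L + θ = θ + j * (2 * π) := by
    simp only [ω]
    field_simp
    ring
  simp [trigMode, hperiod, sin_add_int_mul_two_pi, cos_add_int_mul_two_pi]

theorem integral_trigMode_mul_trigMode {L : ℝ} (hL : L ≠ 0) {n m : ℕ} (hn : n ≠ 0)
    (a b φ c d ψ : ℝ) :
    ∫ s in (0 : ℝ)..L, trigMode (2 * π * n / L) a b φ s * trigMode (2 * π * m / L) c d ψ s =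
      if n = m then L / 2 * ((a * c + b * d) * cos (φ - ψ) + (a * d - b * c) * sin (φ - ψ))
      else 0 := by
  have hdiff : 2 * π * n / L - 2 * π * m / L = 2 * π * ((n - m : ℤ) : ℝ) / L := by
    push_cast
    ring
  have hsum : 2 * π * n / L + 2 * π * m / L = 2 * π * ((n + m : ℤ) : ℝ) / L := by
    push_cast
    ring
  simp_rw [trigMode_mul_trigMode, hdiff, hsum]
  rw [integral_div, integral_add (by apply Continuous.intervalIntegrable; fun_prop)
      (by apply Continuous.intervalIntegrable; fun_prop),
    integral_trigMode_int_freq hL, integral_trigMode_int_freq hL]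
  have hsum_ne : (n + m : ℤ) ≠ 0 := by omega
  simp only [hsum_ne, if_false, sub_eq_zero, Nat.cast_inj]
  split_ifs <;> ring

theorem integral_trigSum_mul_trigSum {L : ℝ} (hL : L ≠ 0) {ω : ℕ → ℝ}
    (hω : ∀ n, ω n = 2 * π * n / L) (N : ℕ) (a b φ c d ψ : ℕ → ℝ) :
    ∫ s in (0 : ℝ)..L, trigSum N ω a b φ s * trigSum N ω c d ψ s =
      L / 2 * ∑ n ∈ Icc 1 N, ((a n * c n + b n * d n) * cos (φ n - ψ n) +
        (a n * d n - b n * c n) * sin (φ n - ψ n)) := by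
  obtain rfl := funext hω
  simp only [trigSum, sum_mul_sum]
  rw [integral_finsetSum fun n _ => by apply Continuous.intervalIntegrable; fun_prop,
    mul_sum]
  refine sum_congr rfl fun n hn => ?_
  have hn0 : n ≠ 0 := by rw [mem_Icc] at hn; omega
  rw [integral_finsetSum fun m _ => by apply Continuous.intervalIntegrable; fun_prop]
  simp only [integral_trigMode_mul_trigMode hL hn0]
  rw [sum_ite_eq, if_pos hn]

theorem hasDerivAt_stress (N : ℕ) {ω : ℕ → ℝ} (hω : ∀ n ∈ Icc 1 N, ω n ≠ 0)
    (A B φ : ℕ → ℝ) (γ K s : ℝ) :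
    HasDerivAt (fun x => γ * ∑ n ∈ Icc 1 N,
          (A n * (cos (φ n) - cos (ω n * x + φ n)) / ω n +
            B n * (sin (ω n * x + φ n) - sin (φ n)) / ω n) -
        K * ∑ n ∈ Icc 1 N,
          (A n * (sin (ω n * x + φ n) - sin (ω n * x)) +
            B n * (cos (ω n * x + φ n) - cos (ω n * x))))
      (γ * trigSum N ω A B φ s -
        K * (deriv (trigSum N ω A B φ) s - deriv (trigSum N ω A B 0) s)) s := by
  -- up to a constant, the `γ`-part is the mode sum with coefficients `(B / ω, -A / ω)`
  have hprim : trigSum N ω (fun n => -(ω n * -(A n / ω n))) (fun n => ω n * (B n / ω n)) φ s =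
      trigSum N ω A B φ s :=
    sum_congr rfl fun n hn => by field_simp [hω n hn]
  rw [(hasDerivAt_trigSum N ω A B φ s).deriv, (hasDerivAt_trigSum N ω A B 0 s).deriv, ← hprim]
  refine ((((hasDerivAt_trigSum N ω (fun n => B n / ω n) (fun n => -(A n / ω n)) φ s).const_add
      (∑ n ∈ Icc 1 N, (A n * cos (φ n) - B n * sin (φ n)) / ω n : ℝ)).const_mul γ).sub
    (((hasDerivAt_trigSum N ω A B φ s).sub (hasDerivAt_trigSum N ω A B 0 s)).const_mul K)
    ).congr_of_eventuallyEq (Filter.Eventually.of_forall fun x => ?_)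
  simp only [Pi.sub_apply, trigSum, trigMode, Pi.zero_apply, add_zero, mul_sum,
    ← sum_add_distrib, ← sum_sub_distrib]
  refine sum_congr rfl fun n _ => ?_
  ring

theorem integral_stress_mul_trigSum {L : ℝ} (hL : L ≠ 0) {ω : ℕ → ℝ}
    (hω : ∀ n, ω n = 2 * π * n / L) (N : ℕ) (A B φ : ℕ → ℝ) (γ K : ℝ) :
    ∫ s in (0 : ℝ)..L,
        (γ * trigSum N ω A B φ s -
          K * (deriv (trigSum N ω A B φ) s - deriv (trigSum N ω A B 0) s)) *
          trigSum N ω A B φ s =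
      L / 2 * ∑ n ∈ Icc 1 N, (A n ^ 2 + B n ^ 2) * (γ + K * ω n * sin (φ n)) := by
  simp only [fun s => (hasDerivAt_trigSum N ω A B φ s).deriv,
    fun s => (hasDerivAt_trigSum N ω A B 0 s).deriv]
  set F := trigSum N ω A B φ
  set F' := trigSum N ω (fun n => -(ω n * B n)) (fun n => ω n * A n) φ
  set G' := trigSum N ω (fun n => -(ω n * B n)) (fun n => ω n * A n) 0
  have hint : ∀ f g : ℝ → ℝ, Continuous f → Continuous g →
      IntervalIntegrable (fun s => f s * g s) MeasureTheory.volume 0 L :=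
    fun f g hf hg => (hf.mul hg).intervalIntegrable _ _
  have hF := continuous_trigSum N ω A B φ
  have hF' := continuous_trigSum N ω (fun n => -(ω n * B n)) (fun n => ω n * A n) φ
  have hG' := continuous_trigSum N ω (fun n => -(ω n * B n)) (fun n => ω n * A n) 0
  rw [integral_congr (g := fun s => γ * (F s * F s) - K * (F' s * F s - G' s * F s))
      fun s _ => by ring,
    integral_sub ((hint _ _ hF hF).const_mul _)
      (((hint _ _ hF' hF).sub (hint _ _ hG' hF)).const_mul _),
    integral_const_mul, integral_const_mul, integral_sub (hint _ _ hF' hF) (hint _ _ hG' hF)]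
  simp only [integral_trigSum_mul_trigSum hL hω, sub_self, cos_zero, sin_zero, Pi.zero_apply,
    zero_sub, sin_neg, cos_neg, mul_sum, ← sum_sub_distrib]
  refine sum_congr rfl fun n _ => ?_
  ring

-- When `ω c = 0` both sides are `0`, the right one through `x / 0 = 0`.
theorem integral_mul_sin_mul_mul (ω c T : ℝ) :
    ∫ t in (0 : ℝ)..T, ω * sin (ω * (c * t)) = (1 - cos (ω * c * T)) / c := by
  rcases eq_or_ne (ω * c) 0 with hωc | hωc
  · rcases mul_eq_zero.1 hωc with rfl | rfl <;> simp
  · simp only [← mul_assoc, integral_const_mul, integral_comp_mul_left sin hωc, integral_sin,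
      mul_zero, cos_zero, smul_eq_mul]
    field_simp [left_ne_zero_of_mul hωc, right_ne_zero_of_mul hωc]

theorem integral_sum_mul_const_add_mul_sin {ι : Type*} (I : Finset ι) (S ω : ι → ℝ)
    (γ K c T : ℝ) :
    ∫ t in (0 : ℝ)..T, ∑ n ∈ I, S n * (γ + K * ω n * sin (ω n * (c * t))) =
      ∑ n ∈ I, S n * (γ * T + K * ((1 - cos (ω n * c * T)) / c)) := by
  rw [integral_finsetSum fun n _ => by apply Continuous.intervalIntegrable; fun_prop]
  refine sum_congr rfl fun n _ => ?_
  rw [integral_const_mul, integral_add intervalIntegrable_const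
    (by apply Continuous.intervalIntegrable; fun_prop)]
  simp only [mul_assoc K, integral_const, integral_const_mul K, integral_mul_sin_mul_mul,
    sub_zero, smul_eq_mul, mul_comm T]

theorem total_work_done_general
    (γ k L T a α c : ℝ) (hL : 0 < L) (hc : c = a / (L * γ * α))
    (N : ℕ) (A B : ℕ → ℝ)
    (q : ℕ → ℝ) (hq : ∀ n, q n = 2 * π * n / L)
    (Δ₂ : ℝ) (hΔ₂ : Δ₂ = (1 / 4) * ∑ n ∈ Finset.Icc 1 N, (A n ^ 2 + B n ^ 2))
    (βt Γ : ℝ → ℝ → ℝ)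
    (hβt : ∀ s t : ℝ, βt s t =
      ∑ n ∈ Finset.Icc 1 N,
        (A n * Real.sin (q n * (s + c * t)) + B n * Real.cos (q n * (s + c * t))))
    (hΓ : ∀ s t : ℝ, Γ s t =
      γ * ∑ n ∈ Finset.Icc 1 N,
        (A n * (Real.cos (q n * (c * t)) - Real.cos (q n * (s + c * t))) / q n +
         B n * (Real.sin (q n * (s + c * t)) - Real.sin (q n * (c * t))) / q n) -
      (k / c) * ∑ n ∈ Finset.Icc 1 N,
        (A n * (Real.sin (q n * (s + c * t)) - Real.sin (q n * s)) +
         B n * (Real.cos (q n * (s + c * t)) - Real.cos (q n * s)))) :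
    (∫ t in (0 : ℝ)..T, ∫ s in (0 : ℝ)..L, deriv (fun x => Γ x t) s * βt s t) =
      2 * L * γ * T * Δ₂ +
      (2 * L ^ 3 * γ ^ 2 * k * α ^ 2 / a ^ 2) *
        (Δ₂ - ∑ n ∈ Finset.Icc 1 N,
          Real.cos (2 * n * π * T * a / (L ^ 2 * γ * α)) * (A n ^ 2 + B n ^ 2) / 4) := by
  have hq0 : ∀ n ∈ Icc 1 N, q n ≠ 0 := fun n hn => by
    have : (n : ℝ) ≠ 0 := by rw [mem_Icc] at hn; norm_cast; omega
    rw [hq]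
    positivity
  have hinner : ∀ t, ∫ s in (0 : ℝ)..L, deriv (fun x => Γ x t) s * βt s t =
      L / 2 * ∑ n ∈ Icc 1 N, (A n ^ 2 + B n ^ 2) * (γ + k / c * q n * sin (q n * (c * t))) := by
    intro t
    have hβ : ∀ s, βt s t = trigSum N q A B (fun n => q n * (c * t)) s := fun s => by
      simp only [hβt, trigSum, trigMode, mul_add]
    have hΓs : ∀ s, deriv (fun x => Γ x t) s =
        γ * trigSum N q A B (fun n => q n * (c * t)) s -
          k / c * (deriv (trigSum N q A B (fun n => q n * (c * t))) s -
            deriv (trigSum N q A B 0) s) := fun s => by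
      simp only [hΓ, mul_add]
      exact (hasDerivAt_stress N hq0 A B (fun n => q n * (c * t)) γ (k / c) s).deriv
    simp only [hβ, hΓs]
    exact integral_stress_mul_trigSum hL.ne' hq N A B _ γ (k / c)
  have hphase : ∀ n : ℕ, q n * c * T = 2 * n * π * T * a / (L ^ 2 * γ * α) := fun n => by
    rw [hq, hc]
    ring
  rw [integral_congr fun t _ => hinner t, integral_const_mul, integral_sum_mul_const_add_mul_sin]
  simp only [hphase, hΔ₂, mul_sum, ← sum_sub_distrib, ← sum_add_distrib]
  refine sum_congr rfl fun n _ => ?_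
  simp only [hc, div_eq_mul_inv, mul_inv, inv_inv]
  ring

/-- Total work done by the optimal active stress over one motion of duration `T`:
`∫₀^T∫₀^L Γ_s β_t ds dt = 2LγTΔ₂ + (2L³γ²kα²/a²)(Δ₂ - Σₙ cos(2nπTa/(L²γα))(aₙ²+bₙ²)/4)`
with `Δ₂ = (1/4)Σₙ(aₙ²+bₙ²)` and `c = a/(Lγα)`. -/
theorem total_work_done
    (γ k L T a α c : ℝ) (hγ : 0 < γ) (hk : 0 < k) (hL : 0 < L) (hT : 0 < T)
    (ha : a ≠ 0) (hα : α ≠ 0) (hc : c = a / (L * γ * α))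
    (N : ℕ) (A B : ℕ → ℝ)
    (q : ℕ → ℝ) (hq : ∀ n, q n = 2 * π * n / L)
    (Δ₂ : ℝ) (hΔ₂ : Δ₂ = (1 / 4) * ∑ n ∈ Finset.Icc 1 N, (A n ^ 2 + B n ^ 2))
    (βt Γ : ℝ → ℝ → ℝ)
    (hβt : ∀ s t : ℝ, βt s t =
      ∑ n ∈ Finset.Icc 1 N,
        (A n * Real.sin (q n * (s + c * t)) + B n * Real.cos (q n * (s + c * t))))
    (hΓ : ∀ s t : ℝ, Γ s t =
      γ * ∑ n ∈ Finset.Icc 1 N,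
        (A n * (Real.cos (q n * (c * t)) - Real.cos (q n * (s + c * t))) / q n +
         B n * (Real.sin (q n * (s + c * t)) - Real.sin (q n * (c * t))) / q n) -
      (k / c) * ∑ n ∈ Finset.Icc 1 N,
        (A n * (Real.sin (q n * (s + c * t)) - Real.sin (q n * s)) +
         B n * (Real.cos (q n * (s + c * t)) - Real.cos (q n * s)))) :
    (∫ t in (0 : ℝ)..T, ∫ s in (0 : ℝ)..L, deriv (fun x => Γ x t) s * βt s t) =
      2 * L * γ * T * Δ₂ +
      (2 * L ^ 3 * γ ^ 2 * k * α ^ 2 / a ^ 2) *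
        (Δ₂ - ∑ n ∈ Finset.Icc 1 N,
          Real.cos (2 * n * π * T * a / (L ^ 2 * γ * α)) * (A n ^ 2 + B n ^ 2) / 4) :=
  total_work_done_general γ k L T a α c hL hc N A B q hq Δ₂ hΔ₂ βt Γ hβt hΓ
end
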